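/- Let F be a finite field, let d be an even positive integer, and let n1, n2, a1, a2, b1, b2, t1, t2, s be positive integers with n1 + n2 = n, a1 + a2 = k, b1 + b2 ≥ d/2, and for i = 1,2: a_i ≤ t_i ≤ n_i − d/2, n_i ≥ k, a_i ≥ d/2, 1 ≤ b_i ≤ d/2. For i = 1,2 let Q_i be a set of a_i × t_i matrices over F of rank a_i whose row spaces are pairwise distinct and satisfy dim(R(G) ∩ R(G')) ≤ a_i − d/2 for all distinct G, G' ∈ Q_i. Let M_{1,2} be a set of a1 × (n2 − t2) matrices with pairwise rank distance ≥ d/2 each of rank ≤ a1 − d/2, and M_{2,1} a set of a2 × (n1 − t1) matrices with pairwise rank distance ≥ d/2 each of rank ≤ a2 − d/2. For r = 1,…,s let M_{1,1}^r be a set of a1 × (n1 − t1) matrices with pairwise rank distance ≥ d/2 and M_{2,2}^r a set of a2 × (n2 − t2) matrices with pairwise rank distance ≥ d/2, such that for all r ≠ r', i ∈ {1,2}, M ∈ M_{i,i}^r and M' ∈ M_{i,i}^{r'}, one has M ≠ M' and rank(M − M') ≥ b_i. Let B_r be the set of row spaces of the k × n block matrices with row blocks of sizes a1, a2 and column blocks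 of sizes t1, n1−t1, t2, n2−t2 given by ( G_1, M_{1,1}, 0, M_{1,2} ; 0, M_{2,1}, G_2, M_{2,2} ), where G_i ∈ Q_i, M_{i,i} ∈ M_{i,i}^r, M_{1,2} ∈ M_{1,2}, M_{2,1} ∈ M_{2,1}. Then every element of B = ∪_{r=1}^s B_r is a k-dimensional subspace of F^n, and any two subspaces in B arising from different generator data satisfy dim(W_1 ∩ W_2) ≤ k − d/2; that is, B is an (n,*,d,k) constant dimension code. -/

import Mathlib

/-!
The subspace distance of the row spaces of two rank-`k` matrices `A`, `A'` is read off the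
stacked matrix: `dim (R(A) ⊓ R(A')) = 2k - rank [A; A']`, so it suffices to show that the two
stacked generator matrices have rank at least `k + d/2`.

If the `G`-blocks differ, say `G₁ ≠ G₁'`, the columns of the `t₁`-block alone have rank
`2a₁ - dim (R(G₁) ⊓ R(G₁')) ≥ a₁ + d/2` and those of the `t₂`-block rank at least `a₂`.
If they agree, subtracting the first generator from the second leaves, after reordering columns,
a block upper triangular matrix with diagonal blocks `diag(G₁, G₂)` of rank `k` and the
difference `Δ` of the `M`-blocks. Its rank is at least `d/2`: a differing off-diagonal block
or a differing diagonal block from the same `r` gives this by the rank distance of its code,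
and for `r ≠ r'` with equal off-diagonal blocks `Δ` is block diagonal of rank `≥ b₁ + b₂`.
-/

open Matrix

/-- The row space of a matrix: the span of its rows, i.e. the range of `vecMul`. -/
noncomputable def rowSpace {F : Type*} [Field F] {m n : Type*} [Fintype m]
    (A : Matrix m n F) : Submodule F (n → F) :=
  LinearMap.range A.vecMulLinear

/-- The generator matrix `( G1, M11, 0, M12 ; 0, M21, G2, M22 )` with row blocks of
sizes `a1, a2` and column blocks of sizes `t1, p1, t2, p2`. -/
def gen7 {F : Type*} [Field F] {a1 a2 t1 t2 p1 p2 : ℕ}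
    (G1 : Matrix (Fin a1) (Fin t1) F) (M11 : Matrix (Fin a1) (Fin p1) F)
    (M12 : Matrix (Fin a1) (Fin p2) F) (M21 : Matrix (Fin a2) (Fin p1) F)
    (G2 : Matrix (Fin a2) (Fin t2) F) (M22 : Matrix (Fin a2) (Fin p2) F) :
    Matrix (Fin a1 ⊕ Fin a2) ((Fin t1 ⊕ Fin p1) ⊕ (Fin t2 ⊕ Fin p2)) F :=
  Matrix.fromBlocks (Matrix.fromCols G1 M11) (Matrix.fromCols 0 M12)
    (Matrix.fromCols 0 M21) (Matrix.fromCols G2 M22)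

open Module

section

variable {F : Type*} [Field F]

theorem Submodule.finrank_map_add_finrank_inf_ker {V W : Type*} [AddCommGroup V] [Module F V]
    [AddCommGroup W] [Module F W] [FiniteDimensional F V] (U : Submodule F V)
    (f : V →ₗ[F] W) :
    finrank F (U.map f) + finrank F ↥(U ⊓ LinearMap.ker f) = finrank F U := by
  have h := LinearMap.finrank_range_add_finrank_ker (f.domRestrict U)
  rwa [LinearMap.range_domRestrict, LinearMap.ker_domRestrict,
    ← Submodule.finrank_map_subtype_eq, Submodule.map_comap_subtype] at h

section RowSpace

variable {m m' n n' : Type*}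

theorem finrank_rowSpace [Fintype m] [Fintype n] (A : Matrix m n F) :
    finrank F (rowSpace A) = A.rank := by
  rw [rowSpace, range_vecMulLinear, rank_eq_finrank_span_row]

theorem rowSpace_fromRows [Fintype m] [Fintype m'] (A : Matrix m n F) (B : Matrix m' n F) :
    rowSpace (fromRows A B) = rowSpace A ⊔ rowSpace B := by
  simp only [rowSpace, range_vecMulLinear, ← Submodule.span_union, ← Set.Sum.elim_range]
  rfl

theorem rank_fromRows_add_finrank_inf [Fintype m] [Fintype m'] [Fintype n] (A : Matrix m n F)
    (B : Matrix m' n F) :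
    (fromRows A B).rank + finrank F ↥(rowSpace A ⊓ rowSpace B) = A.rank + B.rank := by
  rw [← finrank_rowSpace, rowSpace_fromRows, Submodule.finrank_sup_add_finrank_inf_eq,
    finrank_rowSpace, finrank_rowSpace]

theorem add_le_rank_fromRows [Fintype m] [Fintype m'] [Fintype n] {A : Matrix m n F}
    {B : Matrix m' n F} {a e : ℕ} (hA : A.rank = a) (hB : B.rank = a) (he : e ≤ a)
    (hAB : finrank F ↥(rowSpace A ⊓ rowSpace B) ≤ a - e) : a + e ≤ (fromRows A B).rank := by
  have := rank_fromRows_add_finrank_inf A B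
  omega

theorem rank_le_rank_fromRows_left [Fintype n] (A : Matrix m n F) (B : Matrix m' n F) :
    A.rank ≤ (fromRows A B).rank :=
  rank_submatrix_le (fromRows A B) Sum.inl id

theorem rank_fromRows_sub_right [Fintype m] [Fintype n] (A B : Matrix m n F) :
    (fromRows A (B - A)).rank = (fromRows A B).rank := by
  classical
  have hmul : fromRows A (B - A) =
      (fromBlocks 1 0 (-1) 1 : Matrix (m ⊕ m) (m ⊕ m) F) * fromRows A B := by
    rw [fromBlocks_mul_fromRows]
    simp [sub_eq_neg_add]
  rw [hmul, rank_mul_eq_right_of_isUnit_det]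
  simp

theorem rank_add_rank_le_rank_fromBlocks_zero₂₁ [Fintype m] [Fintype m'] [Fintype n]
    [Fintype n'] (A : Matrix m n F) (B : Matrix m n' F) (D : Matrix m' n' F) :
    A.rank + D.rank ≤ (fromBlocks A B 0 D).rank := by
  set U := rowSpace (fromBlocks A B 0 D)
  let π₁ : (n ⊕ n' → F) →ₗ[F] n → F := LinearMap.funLeft F F Sum.inl
  let π₂ : (n ⊕ n' → F) →ₗ[F] n' → F := LinearMap.funLeft F F Sum.inr
  have hA : rowSpace A ≤ U.map π₁ := by
    rintro _ ⟨v, rfl⟩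
    exact ⟨_, ⟨Sum.elim v 0, rfl⟩, by ext; simp [π₁, vecMul_fromBlocks]⟩
  have hD : rowSpace D ≤ (U ⊓ LinearMap.ker π₁).map π₂ := by
    rintro _ ⟨w, rfl⟩
    exact ⟨_, ⟨⟨Sum.elim 0 w, rfl⟩, by ext; simp [π₁, vecMul_fromBlocks]⟩,
      by ext; simp [π₂, vecMul_fromBlocks]⟩
  rw [← finrank_rowSpace, ← finrank_rowSpace, ← finrank_rowSpace,
    ← U.finrank_map_add_finrank_inf_ker π₁]
  exact add_le_add (Submodule.finrank_mono hA)
    ((Submodule.finrank_mono hD).trans (Submodule.finrank_map_le _ _))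

end RowSpace

theorem Matrix.fromBlocks_sub {l m n o α : Type*} [Sub α] (A A' : Matrix n l α)
    (B B' : Matrix n m α) (C C' : Matrix o l α) (D D' : Matrix o m α) :
    fromBlocks A B C D - fromBlocks A' B' C' D' =
      fromBlocks (A - A') (B - B') (C - C') (D - D') := by
  ext (i | i) (j | j) <;> rfl

section Blocks

variable {m₁ m₂ m₁' m₂' n₁ n₂ : Type*}

theorem rank_add_rank_sub_le_rank_fromRows_fromCols [Fintype m₁] [Fintype n₁] [Fintype n₂]
    (T : Matrix m₁ n₁ F) (M M' : Matrix m₁ n₂ F) :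
    T.rank + (M' - M).rank ≤ (fromRows (fromCols T M) (fromCols T M')).rank := by
  have hsub : fromCols T M' - fromCols T M = fromCols 0 (M' - M) := by
    ext i (j | j) <;> simp
  rw [← rank_fromRows_sub_right, hsub, fromRows_fromCols_eq_fromBlocks]
  exact rank_add_rank_le_rank_fromBlocks_zero₂₁ _ _ _

theorem rank_fromRows_le_rank_fromRows_fromCols [Fintype n₁] [Fintype n₂] (T : Matrix m₁ n₁ F)
    (T' : Matrix m₂ n₁ F) (M : Matrix m₁ n₂ F) (M' : Matrix m₂ n₂ F) :
    (fromRows T T').rank ≤ (fromRows (fromCols T M) (fromCols T' M')).rank := by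
  have h : (fromRows (fromCols T M) (fromCols T' M')).submatrix id Sum.inl = fromRows T T' := by
    ext (i | i) j <;> rfl
  rw [← h]
  exact rank_submatrix_le _ _ _

theorem rank_fromRows_add_rank_fromRows_le [Fintype m₁] [Fintype m₂] [Fintype m₁'] [Fintype m₂']
    [Fintype n₁] [Fintype n₂]
    (G₁ : Matrix m₁ n₁ F) (G₁' : Matrix m₁' n₁ F) (G₂ : Matrix m₂ n₂ F)
    (G₂' : Matrix m₂' n₂ F) :
    (fromRows G₁ G₁').rank + (fromRows G₂ G₂').rank ≤
      (fromRows (fromBlocks G₁ 0 0 G₂) (fromBlocks G₁' 0 0 G₂')).rank := by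
  have h : (fromRows (fromBlocks G₁ 0 0 G₂) (fromBlocks G₁' 0 0 G₂')).submatrix
      (Equiv.sumSumSumComm m₁ m₁' m₂ m₂') id =
      fromBlocks (fromRows G₁ G₁') 0 0 (fromRows G₂ G₂') := by
    ext ((i | i) | (i | i)) (j | j) <;> rfl
  calc _ ≤ (fromBlocks (fromRows G₁ G₁') 0 0 (fromRows G₂ G₂')).rank :=
        rank_add_rank_le_rank_fromBlocks_zero₂₁ _ _ _
    _ ≤ _ := h ▸ rank_submatrix_le _ _ _

variable [Fintype n₁] [Fintype n₂] (A : Matrix m₁ n₁ F)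
  (B : Matrix m₁ n₂ F) (C : Matrix m₂ n₁ F) (D : Matrix m₂ n₂ F)

theorem rank_le_rank_fromBlocks₁₁ : A.rank ≤ (fromBlocks A B C D).rank :=
  rank_submatrix_le (fromBlocks A B C D) Sum.inl Sum.inl

theorem rank_le_rank_fromBlocks₁₂ : B.rank ≤ (fromBlocks A B C D).rank :=
  rank_submatrix_le (fromBlocks A B C D) Sum.inl Sum.inr

theorem rank_le_rank_fromBlocks₂₁ : C.rank ≤ (fromBlocks A B C D).rank :=
  rank_submatrix_le (fromBlocks A B C D) Sum.inr Sum.inl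

theorem rank_le_rank_fromBlocks₂₂ : D.rank ≤ (fromBlocks A B C D).rank :=
  rank_submatrix_le (fromBlocks A B C D) Sum.inr Sum.inr

end Blocks

section Generator

variable {a₁ a₂ t₁ t₂ p₁ p₂ : ℕ}

theorem gen7_eq_reindex_fromCols (G₁ : Matrix (Fin a₁) (Fin t₁) F)
    (M₁₁ : Matrix (Fin a₁) (Fin p₁) F) (M₁₂ : Matrix (Fin a₁) (Fin p₂) F)
    (M₂₁ : Matrix (Fin a₂) (Fin p₁) F) (G₂ : Matrix (Fin a₂) (Fin t₂) F)
    (M₂₂ : Matrix (Fin a₂) (Fin p₂) F) :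
    gen7 G₁ M₁₁ M₁₂ M₂₁ G₂ M₂₂ =
      reindex (Equiv.refl _) (Equiv.sumSumSumComm _ _ _ _)
        (fromCols (fromBlocks G₁ 0 0 G₂) (fromBlocks M₁₁ M₁₂ M₂₁ M₂₂)) := by
  ext (i | i) ((j | j) | (j | j)) <;> rfl

theorem rank_gen7 {G₁ : Matrix (Fin a₁) (Fin t₁) F} {G₂ : Matrix (Fin a₂) (Fin t₂) F}
    (hG₁ : G₁.rank = a₁) (hG₂ : G₂.rank = a₂) (M₁₁ : Matrix (Fin a₁) (Fin p₁) F)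
    (M₁₂ : Matrix (Fin a₁) (Fin p₂) F) (M₂₁ : Matrix (Fin a₂) (Fin p₁) F)
    (M₂₂ : Matrix (Fin a₂) (Fin p₂) F) :
    (gen7 G₁ M₁₁ M₁₂ M₂₁ G₂ M₂₂).rank = a₁ + a₂ := by
  refine le_antisymm ((rank_le_card_height _).trans (by simp)) ?_
  rw [gen7_eq_reindex_fromCols, rank_reindex]
  calc a₁ + a₂ = G₁.rank + G₂.rank := by rw [hG₁, hG₂]
    _ ≤ (fromBlocks G₁ 0 0 G₂).rank := rank_add_rank_le_rank_fromBlocks_zero₂₁ _ _ _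
    _ ≤ _ := rank_submatrix_le (fromCols (fromBlocks G₁ 0 0 G₂) _) id Sum.inl

theorem rank_fromRows_gen7
    (G₁ G₁' : Matrix (Fin a₁) (Fin t₁) F) (M₁₁ M₁₁' : Matrix (Fin a₁) (Fin p₁) F)
    (M₁₂ M₁₂' : Matrix (Fin a₁) (Fin p₂) F) (M₂₁ M₂₁' : Matrix (Fin a₂) (Fin p₁) F)
    (G₂ G₂' : Matrix (Fin a₂) (Fin t₂) F) (M₂₂ M₂₂' : Matrix (Fin a₂) (Fin p₂) F) :
    (fromRows (gen7 G₁ M₁₁ M₁₂ M₂₁ G₂ M₂₂) (gen7 G₁' M₁₁' M₁₂' M₂₁' G₂' M₂₂')).rank =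
      (fromRows (fromCols (fromBlocks G₁ 0 0 G₂) (fromBlocks M₁₁ M₁₂ M₂₁ M₂₂))
        (fromCols (fromBlocks G₁' 0 0 G₂') (fromBlocks M₁₁' M₁₂' M₂₁' M₂₂'))).rank := by
  rw [gen7_eq_reindex_fromCols, gen7_eq_reindex_fromCols, ← rank_reindex (Equiv.refl _)
    (Equiv.sumSumSumComm (Fin t₁) (Fin t₂) (Fin p₁) (Fin p₂)) (fromRows _ _)]
  congr 1
  ext (i | i) j <;> rfl

end Generator

theorem le_rank_fromBlocks_sub_fromBlocks {ι m₁ m₂ n₁ n₂ : Type*} [Fintype m₁] [Fintype m₂]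
    [Fintype n₁] [Fintype n₂] {e b₁ b₂ : ℕ} (hb : e ≤ b₁ + b₂)
    {𝓜₁₁ : ι → Set (Matrix m₁ n₁ F)} {𝓜₁₂ : Set (Matrix m₁ n₂ F)}
    {𝓜₂₁ : Set (Matrix m₂ n₁ F)} {𝓜₂₂ : ι → Set (Matrix m₂ n₂ F)}
    (h₁₁ : ∀ r, ∀ M ∈ 𝓜₁₁ r, ∀ M' ∈ 𝓜₁₁ r, M ≠ M' → e ≤ (M - M').rank)
    (h₁₂ : ∀ M ∈ 𝓜₁₂, ∀ M' ∈ 𝓜₁₂, M ≠ M' → e ≤ (M - M').rank)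
    (h₂₁ : ∀ M ∈ 𝓜₂₁, ∀ M' ∈ 𝓜₂₁, M ≠ M' → e ≤ (M - M').rank)
    (h₂₂ : ∀ r, ∀ M ∈ 𝓜₂₂ r, ∀ M' ∈ 𝓜₂₂ r, M ≠ M' → e ≤ (M - M').rank)
    (h₁₁cross : ∀ r r', r ≠ r' → ∀ M ∈ 𝓜₁₁ r, ∀ M' ∈ 𝓜₁₁ r', b₁ ≤ (M - M').rank)
    (h₂₂cross : ∀ r r', r ≠ r' → ∀ M ∈ 𝓜₂₂ r, ∀ M' ∈ 𝓜₂₂ r', b₂ ≤ (M - M').rank)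
    {r r' : ι} {M₁₁ M₁₁' : Matrix m₁ n₁ F} {M₁₂ M₁₂' : Matrix m₁ n₂ F}
    {M₂₁ M₂₁' : Matrix m₂ n₁ F} {M₂₂ M₂₂' : Matrix m₂ n₂ F}
    (hM₁₁ : M₁₁ ∈ 𝓜₁₁ r) (hM₁₁' : M₁₁' ∈ 𝓜₁₁ r') (hM₁₂ : M₁₂ ∈ 𝓜₁₂) (hM₁₂' : M₁₂' ∈ 𝓜₁₂)
    (hM₂₁ : M₂₁ ∈ 𝓜₂₁) (hM₂₁' : M₂₁' ∈ 𝓜₂₁) (hM₂₂ : M₂₂ ∈ 𝓜₂₂ r) (hM₂₂' : M₂₂' ∈ 𝓜₂₂ r')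
    (hne : fromBlocks M₁₁ M₁₂ M₂₁ M₂₂ ≠ fromBlocks M₁₁' M₁₂' M₂₁' M₂₂') :
    e ≤ (fromBlocks M₁₁' M₁₂' M₂₁' M₂₂' - fromBlocks M₁₁ M₁₂ M₂₁ M₂₂).rank := by
  rw [fromBlocks_sub]
  rcases ne_or_eq M₁₂' M₁₂ with hne₁₂ | rfl
  · exact (h₁₂ _ hM₁₂' _ hM₁₂ hne₁₂).trans (rank_le_rank_fromBlocks₁₂ ..)
  rcases ne_or_eq M₂₁' M₂₁ with hne₂₁ | rfl
  · exact (h₂₁ _ hM₂₁' _ hM₂₁ hne₂₁).trans (rank_le_rank_fromBlocks₂₁ ..)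
  rcases eq_or_ne r r' with rfl | hr
  · rcases ne_or_eq M₁₁' M₁₁ with hne₁₁ | rfl
    · exact (h₁₁ r _ hM₁₁' _ hM₁₁ hne₁₁).trans (rank_le_rank_fromBlocks₁₁ ..)
    · have hne₂₂ : M₂₂' ≠ M₂₂ := fun h => hne (by rw [h])
      exact (h₂₂ r _ hM₂₂' _ hM₂₂ hne₂₂).trans (rank_le_rank_fromBlocks₂₂ ..)
  · rw [sub_self, sub_self]
    calc e ≤ b₁ + b₂ := hb
      _ ≤ (M₁₁' - M₁₁).rank + (M₂₂' - M₂₂).rank :=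
        add_le_add (h₁₁cross r' r (Ne.symm hr) _ hM₁₁' _ hM₁₁)
          (h₂₂cross r' r (Ne.symm hr) _ hM₂₂' _ hM₂₂)
      _ ≤ _ := rank_add_rank_le_rank_fromBlocks_zero₂₁ _ _ _

theorem add_le_rank_fromRows_fromBlocks_of_ne {m₁ m₂ n₁ n₂ : Type*} [Fintype m₁] [Fintype m₂]
    [Fintype n₁] [Fintype n₂] {e a₁ a₂ : ℕ} (ha₁ : e ≤ a₁) (ha₂ : e ≤ a₂)
    {Q₁ : Set (Matrix m₁ n₁ F)} {Q₂ : Set (Matrix m₂ n₂ F)}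
    (hQ₁rank : ∀ G ∈ Q₁, G.rank = a₁)
    (hQ₁ : ∀ G ∈ Q₁, ∀ G' ∈ Q₁, G ≠ G' → finrank F ↥(rowSpace G ⊓ rowSpace G') ≤ a₁ - e)
    (hQ₂rank : ∀ G ∈ Q₂, G.rank = a₂)
    (hQ₂ : ∀ G ∈ Q₂, ∀ G' ∈ Q₂, G ≠ G' → finrank F ↥(rowSpace G ⊓ rowSpace G') ≤ a₂ - e)
    {G₁ G₁' : Matrix m₁ n₁ F} {G₂ G₂' : Matrix m₂ n₂ F} (hG₁ : G₁ ∈ Q₁) (hG₁' : G₁' ∈ Q₁)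
    (hG₂ : G₂ ∈ Q₂) (hG₂' : G₂' ∈ Q₂) (hne : ¬(G₁ = G₁' ∧ G₂ = G₂')) :
    a₁ + a₂ + e ≤ (fromRows (fromBlocks G₁ 0 0 G₂) (fromBlocks G₁' 0 0 G₂')).rank := by
  refine le_trans ?_ (rank_fromRows_add_rank_fromRows_le G₁ G₁' G₂ G₂')
  have h₁ := rank_le_rank_fromRows_left G₁ G₁'
  have h₂ := rank_le_rank_fromRows_left G₂ G₂'
  rw [hQ₁rank G₁ hG₁] at h₁
  rw [hQ₂rank G₂ hG₂] at h₂
  rcases not_and_or.1 hne with hne₁ | hne₂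
  · have := add_le_rank_fromRows (hQ₁rank G₁ hG₁) (hQ₁rank G₁' hG₁') ha₁
      (hQ₁ G₁ hG₁ G₁' hG₁' hne₁)
    omega
  · have := add_le_rank_fromRows (hQ₂rank G₂ hG₂) (hQ₂rank G₂' hG₂') ha₂
      (hQ₂ G₂ hG₂ G₂' hG₂' hne₂)
    omega

end

theorem multi_blocks_construction_general
    (F : Type*) [Field F] (d n1 n2 a1 a2 b1 b2 t1 t2 k s : ℕ)
    (hk : a1 + a2 = k) (hb : d / 2 ≤ b1 + b2)
    (ha1 : d / 2 ≤ a1) (ha2 : d / 2 ≤ a2)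
    (Q1 : Set (Matrix (Fin a1) (Fin t1) F)) (Q2 : Set (Matrix (Fin a2) (Fin t2) F))
    (hQ1rank : ∀ G ∈ Q1, G.rank = a1)
    (hQ1 : ∀ G ∈ Q1, ∀ G' ∈ Q1, G ≠ G' →
      rowSpace G ≠ rowSpace G' ∧
        Module.finrank F ↥(rowSpace G ⊓ rowSpace G') ≤ a1 - d / 2)
    (hQ2rank : ∀ G ∈ Q2, G.rank = a2)
    (hQ2 : ∀ G ∈ Q2, ∀ G' ∈ Q2, G ≠ G' →
      rowSpace G ≠ rowSpace G' ∧
        Module.finrank F ↥(rowSpace G ⊓ rowSpace G') ≤ a2 - d / 2)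
    (𝓜12 : Set (Matrix (Fin a1) (Fin (n2 - t2)) F))
    (𝓜21 : Set (Matrix (Fin a2) (Fin (n1 - t1)) F))
    (𝓜11 : Fin s → Set (Matrix (Fin a1) (Fin (n1 - t1)) F))
    (𝓜22 : Fin s → Set (Matrix (Fin a2) (Fin (n2 - t2)) F))
    (h12 : ∀ M ∈ 𝓜12, ∀ M' ∈ 𝓜12, M ≠ M' → d / 2 ≤ (M - M').rank)
    (h21 : ∀ M ∈ 𝓜21, ∀ M' ∈ 𝓜21, M ≠ M' → d / 2 ≤ (M - M').rank)
    (h11 : ∀ r, ∀ M ∈ 𝓜11 r, ∀ M' ∈ 𝓜11 r, M ≠ M' → d / 2 ≤ (M - M').rank)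
    (h22 : ∀ r, ∀ M ∈ 𝓜22 r, ∀ M' ∈ 𝓜22 r, M ≠ M' → d / 2 ≤ (M - M').rank)
    (h11cross : ∀ r r', r ≠ r' → ∀ M ∈ 𝓜11 r, ∀ M' ∈ 𝓜11 r',
      M ≠ M' ∧ b1 ≤ (M - M').rank)
    (h22cross : ∀ r r', r ≠ r' → ∀ M ∈ 𝓜22 r, ∀ M' ∈ 𝓜22 r',
      M ≠ M' ∧ b2 ≤ (M - M').rank) :
    (∀ r, ∀ G1 ∈ Q1, ∀ G2 ∈ Q2, ∀ M11 ∈ 𝓜11 r, ∀ M22 ∈ 𝓜22 r,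
      ∀ M12 ∈ 𝓜12, ∀ M21 ∈ 𝓜21,
      Module.finrank F ↥(rowSpace (gen7 G1 M11 M12 M21 G2 M22)) = k) ∧
    (∀ r r', ∀ G1 ∈ Q1, ∀ G2 ∈ Q2, ∀ M11 ∈ 𝓜11 r, ∀ M22 ∈ 𝓜22 r,
      ∀ M12 ∈ 𝓜12, ∀ M21 ∈ 𝓜21,
      ∀ G1' ∈ Q1, ∀ G2' ∈ Q2, ∀ M11' ∈ 𝓜11 r', ∀ M22' ∈ 𝓜22 r',
      ∀ M12' ∈ 𝓜12, ∀ M21' ∈ 𝓜21,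
      gen7 G1 M11 M12 M21 G2 M22 ≠ gen7 G1' M11' M12' M21' G2' M22' →
        Module.finrank F
          ↥(rowSpace (gen7 G1 M11 M12 M21 G2 M22) ⊓
              rowSpace (gen7 G1' M11' M12' M21' G2' M22')) ≤ k - d / 2) := by
  have hrank : ∀ G1 ∈ Q1, ∀ G2 ∈ Q2, ∀ M11 M12 M21 M22,
      (gen7 (p1 := n1 - t1) (p2 := n2 - t2) G1 M11 M12 M21 G2 M22).rank = k :=
    fun G1 hG1 G2 hG2 M11 M12 M21 M22 =>
      hk ▸ rank_gen7 (hQ1rank G1 hG1) (hQ2rank G2 hG2) M11 M12 M21 M22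
  refine ⟨fun r G1 hG1 G2 hG2 M11 _ M22 _ M12 _ M21 _ => by
    rw [finrank_rowSpace, hrank G1 hG1 G2 hG2], ?_⟩
  intro r r' G1 hG1 G2 hG2 M11 hM11 M22 hM22 M12 hM12 M21 hM21
    G1' hG1' G2' hG2' M11' hM11' M22' hM22' M12' hM12' M21' hM21' hne
  have hsum := rank_fromRows_add_finrank_inf (gen7 G1 M11 M12 M21 G2 M22)
    (gen7 G1' M11' M12' M21' G2' M22')
  rw [hrank G1 hG1 G2 hG2, hrank G1' hG1' G2' hG2', rank_fromRows_gen7] at hsum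
  suffices k + d / 2 ≤ (fromRows (fromCols (fromBlocks G1 0 0 G2) (fromBlocks M11 M12 M21 M22))
      (fromCols (fromBlocks G1' 0 0 G2') (fromBlocks M11' M12' M21' M22'))).rank by omega
  by_cases hG : G1 = G1' ∧ G2 = G2'
  · obtain ⟨rfl, rfl⟩ := hG
    have hM : fromBlocks M11 M12 M21 M22 ≠ fromBlocks M11' M12' M21' M22' := fun h =>
      hne (by rw [gen7_eq_reindex_fromCols, gen7_eq_reindex_fromCols, h])
    have hdiag := rank_add_rank_le_rank_fromBlocks_zero₂₁ G1 0 G2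
    rw [hQ1rank G1 hG1, hQ2rank G2 hG2] at hdiag
    have hΔ := le_rank_fromBlocks_sub_fromBlocks hb h11 h12 h21 h22
      (fun r r' hr M hM M' hM' => (h11cross r r' hr M hM M' hM').2)
      (fun r r' hr M hM M' hM' => (h22cross r r' hr M hM M' hM').2)
      hM11 hM11' hM12 hM12' hM21 hM21' hM22 hM22' hM
    have := rank_add_rank_sub_le_rank_fromRows_fromCols (fromBlocks G1 0 0 G2)
      (fromBlocks M11 M12 M21 M22) (fromBlocks M11' M12' M21' M22')
    omega
  · exact hk ▸ (add_le_rank_fromRows_fromBlocks_of_ne ha1 ha2 hQ1rank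
      (fun G hG G' hG' h => (hQ1 G hG G' hG' h).2) hQ2rank
      (fun G hG G' hG' h => (hQ2 G hG G' hG' h).2) hG1 hG1' hG2 hG2' hG).trans
      (rank_fromRows_le_rank_fromRows_fromCols _ _ _ _)

/-- the multi-blocks construction (Theorem 2.6): block generator matrices
built from small CDCs `Q1, Q2` and rank metric codes (with rank restrictions on the
off-diagonal blocks) have row spaces forming an `(n,*,d,k)` constant dimension code. -/
theorem multi_blocks_construction
    (F : Type*) [Field F] [Fintype F] (d n n1 n2 a1 a2 b1 b2 t1 t2 k s : ℕ)
    (hd : 0 < d) (hd2 : 2 ∣ d) (hs : 0 < s)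
    (hn : n1 + n2 = n) (hk : a1 + a2 = k) (hb : d / 2 ≤ b1 + b2)
    (ht1 : a1 ≤ t1) (ht1' : t1 ≤ n1 - d / 2) (ht2 : a2 ≤ t2) (ht2' : t2 ≤ n2 - d / 2)
    (hn1 : k ≤ n1) (hn2 : k ≤ n2)
    (ha1 : d / 2 ≤ a1) (ha2 : d / 2 ≤ a2)
    (hb1 : 1 ≤ b1) (hb1' : b1 ≤ d / 2) (hb2 : 1 ≤ b2) (hb2' : b2 ≤ d / 2)
    (Q1 : Set (Matrix (Fin a1) (Fin t1) F)) (Q2 : Set (Matrix (Fin a2) (Fin t2) F))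
    (hQ1rank : ∀ G ∈ Q1, G.rank = a1)
    (hQ1 : ∀ G ∈ Q1, ∀ G' ∈ Q1, G ≠ G' →
      rowSpace G ≠ rowSpace G' ∧
        Module.finrank F ↥(rowSpace G ⊓ rowSpace G') ≤ a1 - d / 2)
    (hQ2rank : ∀ G ∈ Q2, G.rank = a2)
    (hQ2 : ∀ G ∈ Q2, ∀ G' ∈ Q2, G ≠ G' →
      rowSpace G ≠ rowSpace G' ∧
        Module.finrank F ↥(rowSpace G ⊓ rowSpace G') ≤ a2 - d / 2)
    (𝓜12 : Set (Matrix (Fin a1) (Fin (n2 - t2)) F))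
    (𝓜21 : Set (Matrix (Fin a2) (Fin (n1 - t1)) F))
    (𝓜11 : Fin s → Set (Matrix (Fin a1) (Fin (n1 - t1)) F))
    (𝓜22 : Fin s → Set (Matrix (Fin a2) (Fin (n2 - t2)) F))
    (h12 : ∀ M ∈ 𝓜12, ∀ M' ∈ 𝓜12, M ≠ M' → d / 2 ≤ (M - M').rank)
    (h12rank : ∀ M ∈ 𝓜12, M.rank ≤ a1 - d / 2)
    (h21 : ∀ M ∈ 𝓜21, ∀ M' ∈ 𝓜21, M ≠ M' → d / 2 ≤ (M - M').rank)
    (h21rank : ∀ M ∈ 𝓜21, M.rank ≤ a2 - d / 2)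
    (h11 : ∀ r, ∀ M ∈ 𝓜11 r, ∀ M' ∈ 𝓜11 r, M ≠ M' → d / 2 ≤ (M - M').rank)
    (h22 : ∀ r, ∀ M ∈ 𝓜22 r, ∀ M' ∈ 𝓜22 r, M ≠ M' → d / 2 ≤ (M - M').rank)
    (h11cross : ∀ r r', r ≠ r' → ∀ M ∈ 𝓜11 r, ∀ M' ∈ 𝓜11 r',
      M ≠ M' ∧ b1 ≤ (M - M').rank)
    (h22cross : ∀ r r', r ≠ r' → ∀ M ∈ 𝓜22 r, ∀ M' ∈ 𝓜22 r',
      M ≠ M' ∧ b2 ≤ (M - M').rank) :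
    (∀ r, ∀ G1 ∈ Q1, ∀ G2 ∈ Q2, ∀ M11 ∈ 𝓜11 r, ∀ M22 ∈ 𝓜22 r,
      ∀ M12 ∈ 𝓜12, ∀ M21 ∈ 𝓜21,
      Module.finrank F ↥(rowSpace (gen7 G1 M11 M12 M21 G2 M22)) = k) ∧
    (∀ r r', ∀ G1 ∈ Q1, ∀ G2 ∈ Q2, ∀ M11 ∈ 𝓜11 r, ∀ M22 ∈ 𝓜22 r,
      ∀ M12 ∈ 𝓜12, ∀ M21 ∈ 𝓜21,
      ∀ G1' ∈ Q1, ∀ G2' ∈ Q2, ∀ M11' ∈ 𝓜11 r', ∀ M22' ∈ 𝓜22 r',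
      ∀ M12' ∈ 𝓜12, ∀ M21' ∈ 𝓜21,
      gen7 G1 M11 M12 M21 G2 M22 ≠ gen7 G1' M11' M12' M21' G2' M22' →
        Module.finrank F
          ↥(rowSpace (gen7 G1 M11 M12 M21 G2 M22) ⊓
              rowSpace (gen7 G1' M11' M12' M21' G2' M22')) ≤ k - d / 2) :=
  multi_blocks_construction_general F d n1 n2 a1 a2 b1 b2 t1 t2 k s hk hb ha1 ha2 Q1 Q2 hQ1rank hQ1
    hQ2rank hQ2 𝓜12 𝓜21 𝓜11 𝓜22 h12 h21 h11 h22 h11cross h22cross
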